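/- Let k be an algebraically closed field of characteristic 2 and c ∈ k. Set G = u v² + w³ + c u² w ∈ k[u, v, w]. Then the set of points (u₀ : v₀ : w₀) ∈ P²(k) at which G, ∂G/∂u, ∂G/∂v and ∂G/∂w all vanish is exactly {(1 : 0 : c^{1/2})}. Hence the plane cubic G = 0 has a unique singular point. -/
import Mathlib


open MvPolynomial

/-- The cuspidal cubic `G = u v² + w³ + c u² w`, with `u = X 0`, `v = X 1`, `w = X 2`. -/
noncomputable def cuspidalCubic (k : Type*) [Field k] (c : k) : MvPolynomial (Fin 3) k :=
  (X 0) * (X 1) ^ 2 + (X 2) ^ 3 + C c * (X 0) ^ 2 * (X 2)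

/-- Over an algebraically closed field of characteristic 2, the common vanishing locus in
`P²(k)` of `G = uv² + w³ + cu²w` and all its partials is exactly `{(1 : 0 : c^{1/2})}`. -/
theorem stmt_9 (k : Type*) [Field k] [IsAlgClosed k] [CharP k 2] (c s : k) (hs : s ^ 2 = c) :
    ∀ u₀ v₀ w₀ : k, (u₀, v₀, w₀) ≠ (0, 0, 0) →
      ((eval ![u₀, v₀, w₀] (cuspidalCubic k c) = 0 ∧
        ∀ i : Fin 3, eval ![u₀, v₀, w₀] (pderiv i (cuspidalCubic k c)) = 0) ↔
        ∃ lam : k, lam ≠ 0 ∧ u₀ = lam ∧ v₀ = 0 ∧ w₀ = lam * s) := by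
  intro u₀ v₀ w₀ h
  have h2 : (2:k) = 0 := CharTwo.two_eq_zero
  have h3eq : (3:k) = 1 := by linear_combination h2
  constructor
  · rintro ⟨hG, hD⟩
    have h1 := hD 0
    have h3 := hD 2
    simp [cuspidalCubic, h2] at hG h1 h3
    rw [h3eq, one_mul] at h3
    -- (w₀ - s*u₀)^2 = 0
    have hsq : (w₀ - s * u₀) ^ 2 = 0 := by
      have := hs
      linear_combination h3 + u₀^2 * hs - s*u₀*w₀*h2
    have hw : w₀ = s * u₀ :=
      sub_eq_zero.mp (pow_eq_zero_iff (n := 2) (by norm_num) |>.mp hsq)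
    have hu : u₀ ≠ 0 := by
      rintro rfl
      simp at hw
      exact h (by simp [h1, hw])
    exact ⟨u₀, hu, rfl, h1, by rw [hw, mul_comm]⟩
  · rintro ⟨lam, hl, rfl, rfl, rfl⟩
    refine ⟨?_, ?_⟩
    · simp only [cuspidalCubic]
      simp only [eval_add, eval_mul, eval_pow, eval_C, eval_X]
      simp only [Matrix.cons_val_zero, Matrix.cons_val_one, Matrix.head_cons,
        Matrix.cons_val_two, Matrix.tail_cons]
      linear_combination u₀^3*s^3*h2 - u₀^3*s*hs
    · intro i
      fin_cases i
      · simp [cuspidalCubic, h2]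
      · simp [cuspidalCubic, h2]
      · simp [cuspidalCubic, h2]
        linear_combination (2:k)*u₀^2*s^2*h2 - u₀^2*hs
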